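/- arXiv:1112.2300 — 2 statements merged into one kernel-verified Lean document; each statement's English description precedes it below -/
import Mathlib

section
/- Every exchange matrix B of a cluster algebra of finite type has a companion basis. -/
namespace ClusterReflection

variable {n : ℕ}

/-- A square integer matrix `B` is skew-symmetrisable if `D * B` is skew-symmetric for some
diagonal matrix `D` with positive diagonal entries. -/
def IsSkewSymmetrizable (B : Matrix (Fin n) (Fin n) ℤ) : Prop :=
  ∃ d : Fin n → ℤ, (∀ i, 0 < d i) ∧ ∀ i j, d i * B i j = -(d j * B j i)

/-- Fomin-Zelevinsky matrix mutation in direction `k`. -/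
def mutate (k : Fin n) (B : Matrix (Fin n) (Fin n) ℤ) : Matrix (Fin n) (Fin n) ℤ :=
  Matrix.of fun i j =>
    if i = k ∨ j = k then -B i j
    else B i j + (|B i k| * B k j + B i k * |B k j|) / 2

/-- One-step mutation relation. -/
def Mutation (X Y : Matrix (Fin n) (Fin n) ℤ) : Prop := ∃ k, Y = mutate k X

/-- `B` is of finite type (2-finite) if every matrix obtained from it by a finite sequence of
mutations has `|B'_{ij} B'_{ji}| ≤ 3` for all `i, j`. -/
def IsFiniteType (B : Matrix (Fin n) (Fin n) ℤ) : Prop :=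
  ∀ B', Relation.ReflTransGen Mutation B B' → ∀ i j, |B' i j * B' j i| ≤ 3

open RealInnerProductSpace

/-- The pairing `(β, α^∨) = 2⟪β, α⟫/⟪α, α⟫` of a vector with the coroot of `α`. -/
noncomputable def pairing (β α : EuclideanSpace ℝ (Fin n)) : ℝ :=
  2 * ⟪β, α⟫ / ⟪α, α⟫

/-- The reflection `s_α(v) = v - (v, α^∨) α` in the root `α`. -/
noncomputable def reflRoot (α v : EuclideanSpace ℝ (Fin n)) : EuclideanSpace ℝ (Fin n) :=
  v - pairing v α • α

/-- `Φ` is a finite crystallographic root system of rank `n` in `ℝ^n`. -/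
def IsRootSystem (Φ : Set (EuclideanSpace ℝ (Fin n))) : Prop :=
  Φ.Finite ∧ (∀ α ∈ Φ, α ≠ 0) ∧ Submodule.span ℝ Φ = ⊤ ∧
  (∀ α ∈ Φ, ∀ t : ℝ, t • α ∈ Φ → t = 1 ∨ t = -1) ∧
  (∀ α ∈ Φ, ∀ β ∈ Φ, reflRoot α β ∈ Φ) ∧
  (∀ α ∈ Φ, ∀ β ∈ Φ, ∃ z : ℤ, pairing β α = z)

/-- `α` lists a base (system of simple roots) of the root system `Φ`. -/
def IsBase (Φ : Set (EuclideanSpace ℝ (Fin n)))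
    (α : Fin n → EuclideanSpace ℝ (Fin n)) : Prop :=
  (∀ i, α i ∈ Φ) ∧ LinearIndependent ℝ α ∧
  ∀ γ ∈ Φ, ∃ c : Fin n → ℤ, γ = ∑ i, (c i : ℝ) • α i ∧ ((∀ i, 0 ≤ c i) ∨ (∀ i, c i ≤ 0))

/-- The Cartan counterpart `A(B)` of a skew-symmetrisable matrix `B`. -/
def cartanCounterpart (B : Matrix (Fin n) (Fin n) ℤ) : Matrix (Fin n) (Fin n) ℤ :=
  Matrix.of fun i j => if i = j then 2 else -|B i j|

/-- `B` is an exchange matrix of the cluster algebra of finite type whose root system is `Φ`: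
it is skew-symmetrisable of finite type and mutation-equivalent to a matrix whose Cartan
counterpart is the Cartan matrix of the corresponding Dynkin diagram, i.e. the matrix of
pairings `(α_i, α_j^∨)` of a base of `Φ`. -/
def IsExchangeMatrix (Φ : Set (EuclideanSpace ℝ (Fin n)))
    (B : Matrix (Fin n) (Fin n) ℤ) : Prop :=
  IsSkewSymmetrizable B ∧ IsFiniteType B ∧
  ∃ B₀ : Matrix (Fin n) (Fin n) ℤ, Relation.ReflTransGen Mutation B B₀ ∧
    ∃ α : Fin n → EuclideanSpace ℝ (Fin n), IsBase Φ α ∧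
      ∀ i j, (cartanCounterpart B₀ i j : ℝ) = pairing (α i) (α j)

/-- `β` is a companion basis for `B`: a family of roots forming a `ℤ`-basis of the root
lattice `ℤΦ` with `|(β_i, β_j^∨)| = |B_{ij}|` for all `i ≠ j`. -/
def IsCompanionBasis (Φ : Set (EuclideanSpace ℝ (Fin n))) (B : Matrix (Fin n) (Fin n) ℤ)
    (β : Fin n → EuclideanSpace ℝ (Fin n)) : Prop :=
  (∀ i, β i ∈ Φ) ∧ LinearIndependent ℤ β ∧
  Submodule.span ℤ (Set.range β) = Submodule.span ℤ Φ ∧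
  ∀ i j, i ≠ j → |pairing (β i) (β j)| = |(B i j : ℝ)|

/-- The inward mutation `μ_k(𝓑)` of a companion basis: `β_i` is replaced by `s_{β_k}(β_i)`
whenever there is an arrow `i → k` in `Γ(B)` (i.e. `B_{ik} > 0`), and unchanged otherwise. -/
noncomputable def mutateBasis (B : Matrix (Fin n) (Fin n) ℤ) (k : Fin n)
    (β : Fin n → EuclideanSpace ℝ (Fin n)) : Fin n → EuclideanSpace ℝ (Fin n) :=
  fun i => if 0 < B i k then reflRoot (β k) (β i) else β i

/-!
Induct along the mutation sequence from `B` to the matrix `B₀` whose Cartan counterpart is the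
Cartan matrix: the simple roots form a companion basis of `B₀`, and the inward mutation of a
companion basis `β` of `B` at `k` is a companion basis of `μ_k(B)`. Reflections in roots preserve
`Φ`, and by integrality of the pairings they preserve the lattice spanned by `β`. When exactly
one of `β_i`, `β_j` is reflected, their pairing becomes `(β_i, β_j^∨) - (β_i, β_k^∨)(β_k, β_j^∨)`;
the correction vanishes unless `k` lies on a path between `i` and `j`, and then
`|μ_k(B)_{ij}| = ||B_{ij}| - |B_{ik} B_{kj}||` because in finite type every triangle is an
oriented cycle. The matching identity for the pairings holds
because, for linearly independent roots, positivity of their Gram determinant forces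
`(β_i, β_j^∨)` and `(β_i, β_k^∨)(β_k, β_j^∨)` to have the same sign.
-/

section Mutation

variable {B : Matrix (Fin n) (Fin n) ℤ} {i j k : Fin n}

lemma two_dvd_abs_mul_add_mul_abs (a b : ℤ) : 2 ∣ |a| * b + a * |b| := by
  rcases abs_choice a with ha | ha <;> rcases abs_choice b with hb | hb <;> rw [ha, hb]
  exacts [⟨a * b, by ring⟩, ⟨0, by ring⟩, ⟨0, by ring⟩, ⟨-(a * b), by ring⟩]

@[simp]
lemma mutate_apply_left (k j : Fin n) (B : Matrix (Fin n) (Fin n) ℤ) :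
    mutate k B k j = -B k j := by
  simp [mutate]

@[simp]
lemma mutate_apply_right (i k : Fin n) (B : Matrix (Fin n) (Fin n) ℤ) :
    mutate k B i k = -B i k := by
  simp [mutate]

lemma mutate_apply_of_ne (hi : i ≠ k) (hj : j ≠ k) :
    mutate k B i j = B i j + (|B i k| * B k j + B i k * |B k j|) / 2 := by
  simp [mutate, hi, hj]

lemma mutate_apply_of_nonneg (hi : i ≠ k) (hj : j ≠ k) (hik : 0 ≤ B i k) (hkj : 0 ≤ B k j) :
    mutate k B i j = B i j + B i k * B k j := by
  rw [mutate_apply_of_ne hi hj, abs_of_nonneg hik, abs_of_nonneg hkj, ← two_mul,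
    Int.mul_ediv_cancel_left _ two_ne_zero]

lemma mutate_apply_of_nonpos (hi : i ≠ k) (hj : j ≠ k) (hik : B i k ≤ 0) (hkj : B k j ≤ 0) :
    mutate k B i j = B i j - B i k * B k j := by
  rw [mutate_apply_of_ne hi hj, abs_of_nonpos hik, abs_of_nonpos hkj,
    show -B i k * B k j + B i k * -B k j = 2 * -(B i k * B k j) by ring,
    Int.mul_ediv_cancel_left _ two_ne_zero, sub_eq_add_neg]

lemma mutate_apply_of_mul_nonpos (hi : i ≠ k) (hj : j ≠ k) (h : B i k * B k j ≤ 0) :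
    mutate k B i j = B i j := by
  rw [mutate_apply_of_ne hi hj]
  rcases mul_nonpos_iff.mp h with ⟨hik, hkj⟩ | ⟨hik, hkj⟩
  · rw [abs_of_nonneg hik, abs_of_nonpos hkj]; simp
  · rw [abs_of_nonpos hik, abs_of_nonneg hkj]; simp

lemma mutate_mutate (k : Fin n) (B : Matrix (Fin n) (Fin n) ℤ) : mutate k (mutate k B) = B := by
  ext i j
  by_cases hi : i = k
  · subst hi; simp
  by_cases hj : j = k
  · subst hj; simp
  rw [mutate_apply_of_ne hi hj, mutate_apply_of_ne hi hj, mutate_apply_right, mutate_apply_left,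
    abs_neg, abs_neg,
    show |B i k| * -B k j + -B i k * |B k j| = -(|B i k| * B k j + B i k * |B k j|) by ring,
    Int.neg_ediv_of_dvd (two_dvd_abs_mul_add_mul_abs _ _)]
  ring

end Mutation

namespace IsSkewSymmetrizable

variable {B : Matrix (Fin n) (Fin n) ℤ} {i j : Fin n}

lemma apply_self (hB : IsSkewSymmetrizable B) (k : Fin n) : B k k = 0 := by
  obtain ⟨d, hd, hdB⟩ := hB
  have := hdB k k
  have := hd k
  nlinarith

lemma pos_iff_neg (hB : IsSkewSymmetrizable B) : 0 < B i j ↔ B j i < 0 := by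
  obtain ⟨d, hd, hdB⟩ := hB
  have := hdB i j
  have := hd i
  have := hd j
  constructor <;> intro h <;> nlinarith

lemma apply_eq_zero_iff (hB : IsSkewSymmetrizable B) : B j i = 0 ↔ B i j = 0 := by
  obtain ⟨d, hd, hdB⟩ := hB
  have := hdB i j
  constructor <;> intro h
  · simpa [h, (hd i).ne'] using this
  · simpa [h, (hd j).ne'] using this.symm

lemma nonneg_iff_nonpos (hB : IsSkewSymmetrizable B) : 0 ≤ B i j ↔ B j i ≤ 0 := by
  rw [le_iff_lt_or_eq, le_iff_lt_or_eq, hB.pos_iff_neg, eq_comm, hB.apply_eq_zero_iff]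

lemma mutate (hB : IsSkewSymmetrizable B) (k : Fin n) : IsSkewSymmetrizable (mutate k B) := by
  obtain ⟨d, hd, hdB⟩ := hB
  refine ⟨d, hd, fun i j => ?_⟩
  by_cases hk : i = k ∨ j = k
  · rcases hk with rfl | rfl <;> simp only [mutate_apply_left, mutate_apply_right] <;>
      linarith [hdB i j]
  push Not at hk
  rw [mutate_apply_of_ne hk.1 hk.2, mutate_apply_of_ne hk.2 hk.1]
  have habs : ∀ a b, d a * |B a b| = d b * |B b a| := fun a b => by
    simpa [abs_mul, abs_of_pos (hd a), abs_of_pos (hd b)] using congrArg abs (hdB a b)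
  -- after multiplying by `d k`, trade `d i B_ik` for `-d k B_ki` and `d k B_kj` for `-d j B_jk`
  have hsum : d i * (|B i k| * B k j + B i k * |B k j|) =
      -(d j * (|B j k| * B k i + B j k * |B k i|)) := by
    refine mul_left_cancel₀ (hd k).ne' ?_
    linear_combination (d k * B k j) * habs i k + (d k * |B k j|) * hdB i k
      + (d k * |B k i|) * hdB k j - (d k * B k i) * habs k j
  obtain ⟨s, hs⟩ := two_dvd_abs_mul_add_mul_abs (B i k) (B k j)
  obtain ⟨t, ht⟩ := two_dvd_abs_mul_add_mul_abs (B j k) (B k i)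
  rw [hs, ht] at hsum ⊢
  rw [Int.mul_ediv_cancel_left _ two_ne_zero, Int.mul_ediv_cancel_left _ two_ne_zero]
  linarith [hdB i j]

end IsSkewSymmetrizable

namespace IsFiniteType

variable {B : Matrix (Fin n) (Fin n) ℤ} {i j k : Fin n}

/-- Otherwise mutating at `k` would give `|B'_{ij} B'_{ji}| ≥ 4`. -/
lemma apply_nonpos_of_pos_of_pos (hf : IsFiniteType B) (hs : IsSkewSymmetrizable B)
    (hik : 0 < B i k) (hkj : 0 < B k j) : B i j ≤ 0 := by
  have hi : i ≠ k := by rintro rfl; simp [hs.apply_self] at hik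
  have hj : j ≠ k := by rintro rfl; simp [hs.apply_self] at hkj
  by_contra! hij
  have hji := hs.pos_iff_neg.mp hij
  have hki := hs.pos_iff_neg.mp hik
  have hjk := hs.pos_iff_neg.mp hkj
  have hbound := hf _ (.single ⟨k, rfl⟩) i j
  rw [mutate_apply_of_nonneg hi hj hik.le hkj.le,
    mutate_apply_of_nonpos hj hi hjk.le hki.le, abs_le] at hbound
  have h₁ : 2 ≤ B i j + B i k * B k j := by nlinarith
  have h₂ : B j i - B j k * B k i ≤ -2 := by nlinarith
  nlinarith

lemma abs_mutate_apply_of_mul_pos (hf : IsFiniteType B) (hs : IsSkewSymmetrizable B)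
    (hi : i ≠ k) (hj : j ≠ k) (h : 0 < B i k * B k j) :
    |mutate k B i j| = |(|B i j| - |B i k * B k j|)| := by
  rcases mul_pos_iff.mp h with ⟨hik, hkj⟩ | ⟨hik, hkj⟩
  · have hij := hf.apply_nonpos_of_pos_of_pos hs hik hkj
    rw [mutate_apply_of_nonneg hi hj hik.le hkj.le, abs_of_nonpos hij, abs_of_pos h,
      abs_sub_comm, sub_neg_eq_add, add_comm]
  · have hji := hf.apply_nonpos_of_pos_of_pos hs (hs.pos_iff_neg.mpr hkj) (hs.pos_iff_neg.mpr hik)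
    rw [mutate_apply_of_nonpos hi hj hik.le hkj.le, abs_of_nonneg (hs.nonneg_iff_nonpos.mpr hji),
      abs_of_pos h]

lemma mutate (hB : IsFiniteType B) (k : Fin n) : IsFiniteType (mutate k B) :=
  fun B' hB' => hB B' (.head ⟨k, rfl⟩ hB')

end IsFiniteType

section Pairing

variable {x y γ : EuclideanSpace ℝ (Fin n)}

lemma pairing_self (hx : x ≠ 0) : pairing x x = 2 := by
  rw [pairing, mul_div_assoc, div_self (real_inner_self_pos.mpr hx).ne', mul_one]

lemma pairing_mul_pairing (x y : EuclideanSpace ℝ (Fin n)) :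
    pairing x y * pairing y x = 4 * ⟪x, y⟫ ^ 2 / (⟪x, x⟫ * ⟪y, y⟫) := by
  rw [pairing, pairing, real_inner_comm y x, div_mul_div_comm]
  ring

lemma pairing_mul_pairing_nonneg (x y : EuclideanSpace ℝ (Fin n)) :
    0 ≤ pairing x y * pairing y x := by
  rw [pairing_mul_pairing]
  have := real_inner_self_nonneg (x := x)
  have := real_inner_self_nonneg (x := y)
  positivity

lemma one_le_pairing_mul_pairing_iff (hx : x ≠ 0) (hy : y ≠ 0) :
    1 ≤ pairing x y * pairing y x ↔ ⟪x, x⟫ * ⟪y, y⟫ ≤ 4 * ⟪x, y⟫ ^ 2 := by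
  rw [pairing_mul_pairing, one_le_div (mul_pos (real_inner_self_pos.mpr hx)
    (real_inner_self_pos.mpr hy))]

lemma inner_reflRoot_reflRoot (γ x y : EuclideanSpace ℝ (Fin n)) :
    ⟪reflRoot γ x, reflRoot γ y⟫ = ⟪x, y⟫ := by
  rcases eq_or_ne γ 0 with rfl | hγ
  · simp [reflRoot]
  have hg := (real_inner_self_pos.mpr hγ).ne'
  simp only [reflRoot, pairing, inner_sub_left, inner_sub_right, real_inner_smul_left,
    real_inner_smul_right, real_inner_comm γ x, real_inner_comm γ y]
  field_simp
  ring

lemma inner_reflRoot_right (γ x y : EuclideanSpace ℝ (Fin n)) :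
    ⟪x, reflRoot γ y⟫ = ⟪reflRoot γ x, y⟫ := by
  simp only [reflRoot, pairing, inner_sub_left, inner_sub_right, real_inner_smul_left,
    real_inner_smul_right, real_inner_comm γ x, real_inner_comm γ y]
  ring

lemma pairing_reflRoot_left (γ x y : EuclideanSpace ℝ (Fin n)) :
    pairing (reflRoot γ x) y = pairing x y - pairing x γ * pairing γ y := by
  simp only [pairing, reflRoot, inner_sub_left, real_inner_smul_left]
  ring

lemma pairing_reflRoot_right (γ x y : EuclideanSpace ℝ (Fin n)) :
    pairing x (reflRoot γ y) = pairing x y - pairing x γ * pairing γ y := by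
  rw [← pairing_reflRoot_left, pairing, pairing, inner_reflRoot_right, inner_reflRoot_reflRoot]

lemma pairing_reflRoot_reflRoot (γ x y : EuclideanSpace ℝ (Fin n)) :
    pairing (reflRoot γ x) (reflRoot γ y) = pairing x y := by
  rw [pairing, pairing, inner_reflRoot_reflRoot, inner_reflRoot_reflRoot]

lemma pairing_reflRoot_self_left (hγ : γ ≠ 0) (x : EuclideanSpace ℝ (Fin n)) :
    pairing (reflRoot γ x) γ = -pairing x γ := by
  rw [pairing_reflRoot_left, pairing_self hγ]
  ring

lemma pairing_self_reflRoot_right (hγ : γ ≠ 0) (y : EuclideanSpace ℝ (Fin n)) :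
    pairing γ (reflRoot γ y) = -pairing γ y := by
  rw [pairing_reflRoot_right, pairing_self hγ]
  ring

end Pairing

lemma abs_sub_of_mul_nonneg {a b : ℝ} (h : 0 ≤ a * b) : |a - b| = |(|a| - |b|)| := by
  rcases mul_nonneg_iff.mp h with ⟨ha, hb⟩ | ⟨ha, hb⟩
  · rw [abs_of_nonneg ha, abs_of_nonneg hb]
  · rw [abs_of_nonpos ha, abs_of_nonpos hb, ← abs_neg]
    ring_nf

lemma mul_mul_pos_of_det_pos {a b c X Y Z : ℝ} (ha : 0 < a) (hb : 0 < b) (hc : 0 < c)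
    (hX : a * b ≤ 4 * X ^ 2) (hY : b * c ≤ 4 * Y ^ 2) (hZ : c * a ≤ 4 * Z ^ 2)
    (hdet : 0 < a * b * c + 2 * (X * Y * Z) - a * Y ^ 2 - b * Z ^ 2 - c * X ^ 2) :
    0 < X * Y * Z := by
  by_contra! hneg
  have habc : 0 < a * b * c := by positivity
  have hsq : (a * b * c) ^ 2 ≤ 64 * (X * Y * Z) ^ 2 := by
    calc (a * b * c) ^ 2 = (a * b) * (b * c) * (c * a) := by ring
      _ ≤ (4 * X ^ 2) * (4 * Y ^ 2) * (4 * Z ^ 2) := by gcongr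
      _ = 64 * (X * Y * Z) ^ 2 := by ring
  have h8 : 8 * (X * Y * Z) ≤ -(a * b * c) := by nlinarith
  nlinarith [mul_le_mul_of_nonneg_left hY ha.le, mul_le_mul_of_nonneg_left hZ hb.le,
    mul_le_mul_of_nonneg_left hX hc.le]

section Gram

variable {ι : Type*} {v : ι → EuclideanSpace ℝ (Fin n)} {i j k : ι}

lemma det_gram_pos (hv : LinearIndependent ℝ v) (hij : i ≠ j) (hik : i ≠ k) (hjk : j ≠ k) :
    0 < ⟪v i, v i⟫ * ⟪v j, v j⟫ * ⟪v k, v k⟫ + 2 * (⟪v i, v j⟫ * ⟪v j, v k⟫ * ⟪v k, v i⟫)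
      - ⟪v i, v i⟫ * ⟪v j, v k⟫ ^ 2 - ⟪v j, v j⟫ * ⟪v k, v i⟫ ^ 2
      - ⟪v k, v k⟫ * ⟪v i, v j⟫ ^ 2 := by
  have hinj : Function.Injective ![i, j, k] := by
    simp [Function.Injective, Fin.forall_fin_succ, hij, hik, hjk, hij.symm, hik.symm, hjk.symm]
  have := (Matrix.posDef_gram_of_linearIndependent (hv.comp _ hinj)).det_pos
  rw [Matrix.det_fin_three] at this
  simp only [Matrix.gram, Matrix.of_apply, Function.comp_apply, Matrix.cons_val_zero,
    Matrix.cons_val_one, Matrix.cons_val_two, Matrix.head_cons, Matrix.tail_cons] at this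
  rw [real_inner_comm (v i) (v j), real_inner_comm (v j) (v k), real_inner_comm (v k) (v i)] at this
  linarith

/-- The hypotheses say that all three cosines have absolute value at least `1 / 2`; if their
product were negative, the Gram determinant of `v i, v j, v k` would be nonpositive. -/
lemma pairing_mul_pairing_mul_pairing_pos (hv : LinearIndependent ℝ v)
    (hij : i ≠ j) (hik : i ≠ k) (hjk : j ≠ k)
    (h₁ : 1 ≤ pairing (v i) (v j) * pairing (v j) (v i))
    (h₂ : 1 ≤ pairing (v j) (v k) * pairing (v k) (v j))
    (h₃ : 1 ≤ pairing (v k) (v i) * pairing (v i) (v k)) :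
    0 < pairing (v i) (v j) * (pairing (v i) (v k) * pairing (v k) (v j)) := by
  have ha := real_inner_self_pos.mpr (hv.ne_zero i)
  have hb := real_inner_self_pos.mpr (hv.ne_zero j)
  have hc := real_inner_self_pos.mpr (hv.ne_zero k)
  rw [one_le_pairing_mul_pairing_iff (hv.ne_zero _) (hv.ne_zero _)] at h₁ h₂ h₃
  have hcyc := mul_mul_pos_of_det_pos ha hb hc h₁ h₂ h₃ (det_gram_pos hv hij hik hjk)
  rw [pairing, pairing, pairing, real_inner_comm (v k) (v i), real_inner_comm (v j) (v k)]
  have : 2 * ⟪v i, v j⟫ / ⟪v j, v j⟫ * (2 * ⟪v k, v i⟫ / ⟪v k, v k⟫ * (2 * ⟪v j, v k⟫ / ⟪v j, v j⟫))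
      = 8 * (⟪v i, v j⟫ * ⟪v j, v k⟫ * ⟪v k, v i⟫) / (⟪v j, v j⟫ * ⟪v k, v k⟫ * ⟪v j, v j⟫) := by
    field_simp
    ring
  rw [this]
  positivity

end Gram

lemma span_range_sub_smul {R M ι : Type*} [Ring R] [AddCommGroup M] [Module R M] (v : ι → M)
    (c : ι → R) {k : ι} (hk : c k = 0) :
    Submodule.span R (Set.range fun i => v i - c i • v k) = Submodule.span R (Set.range v) := by
  apply le_antisymm <;> rw [Submodule.span_le] <;> rintro _ ⟨i, rfl⟩
  · exact sub_mem (Submodule.subset_span ⟨i, rfl⟩)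
      (Submodule.smul_mem _ _ (Submodule.subset_span ⟨k, rfl⟩))
  · have hk : v k ∈ Submodule.span R (Set.range fun i => v i - c i • v k) := by
      simpa [hk] using Submodule.subset_span (R := R)
        (Set.mem_range_self (f := fun i => v i - c i • v k) k)
    rw [← sub_add_cancel (v i) (c i • v k)]
    exact add_mem (Submodule.subset_span ⟨i, rfl⟩) (Submodule.smul_mem _ _ hk)

lemma linearIndependent_of_span_int_eq {Φ : Set (EuclideanSpace ℝ (Fin n))}
    (hΦ : Submodule.span ℝ Φ = ⊤) {v : Fin n → EuclideanSpace ℝ (Fin n)}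
    (hv : Submodule.span ℤ (Set.range v) = Submodule.span ℤ Φ) : LinearIndependent ℝ v := by
  refine linearIndependent_of_top_le_span_of_card_eq_finrank ?_ (by simp)
  rw [← hΦ, Submodule.span_le]
  exact fun φ hφ => Submodule.span_le_restrictScalars ℤ ℝ _ (hv ▸ Submodule.subset_span hφ)

namespace IsCompanionBasis

variable {Φ : Set (EuclideanSpace ℝ (Fin n))} {B : Matrix (Fin n) (Fin n) ℤ}
  {β : Fin n → EuclideanSpace ℝ (Fin n)} {i j : Fin n}

lemma abs_pairing (hβ : IsCompanionBasis Φ B β) (hij : i ≠ j) :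
    |pairing (β i) (β j)| = |(B i j : ℝ)| :=
  hβ.2.2.2 i j hij

lemma pairing_eq_zero_iff (hβ : IsCompanionBasis Φ B β) (hij : i ≠ j) :
    pairing (β i) (β j) = 0 ↔ B i j = 0 := by
  rw [← abs_eq_zero, hβ.abs_pairing hij, abs_eq_zero, Int.cast_eq_zero]

lemma one_le_pairing_mul_pairing (hβ : IsCompanionBasis Φ B β) (hB : IsSkewSymmetrizable B)
    (hij : i ≠ j) (h : B i j ≠ 0) : 1 ≤ pairing (β i) (β j) * pairing (β j) (β i) := by
  rw [← abs_of_nonneg (pairing_mul_pairing_nonneg _ _), abs_mul, hβ.abs_pairing hij,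
    hβ.abs_pairing hij.symm, ← abs_mul]
  exact_mod_cast Int.one_le_abs (mul_ne_zero h (hB.apply_eq_zero_iff.not.mpr h))

end IsCompanionBasis

lemma IsBase.isCompanionBasis {Φ : Set (EuclideanSpace ℝ (Fin n))}
    {α : Fin n → EuclideanSpace ℝ (Fin n)} {B : Matrix (Fin n) (Fin n) ℤ} (hα : IsBase Φ α)
    (hB : ∀ i j, (cartanCounterpart B i j : ℝ) = pairing (α i) (α j)) :
    IsCompanionBasis Φ B α := by
  obtain ⟨hmem, hli, hexp⟩ := hα
  refine ⟨hmem, hli.restrict_scalars' ℤ, le_antisymm ?_ ?_, fun i j hij => ?_⟩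
  · exact Submodule.span_mono (Set.range_subset_iff.mpr hmem)
  · rw [Submodule.span_le]
    intro γ hγ
    obtain ⟨c, rfl, -⟩ := hexp γ hγ
    refine sum_mem fun i _ => ?_
    rw [Int.cast_smul_eq_zsmul]
    exact Submodule.smul_mem _ _ (Submodule.subset_span ⟨i, rfl⟩)
  · rw [← hB, cartanCounterpart, Matrix.of_apply, if_neg hij]
    push_cast
    rw [abs_neg, abs_abs]

section MutateBasis

variable {Φ : Set (EuclideanSpace ℝ (Fin n))} {B : Matrix (Fin n) (Fin n) ℤ}
  {β : Fin n → EuclideanSpace ℝ (Fin n)} {i j k : Fin n}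

lemma mutateBasis_mem (hΦ : ∀ α ∈ Φ, ∀ β ∈ Φ, reflRoot α β ∈ Φ) (hβ : ∀ i, β i ∈ Φ)
    (i : Fin n) : mutateBasis B k β i ∈ Φ := by
  unfold mutateBasis
  split_ifs
  exacts [hΦ _ (hβ k) _ (hβ i), hβ i]

lemma span_mutateBasis (hB : IsSkewSymmetrizable B)
    (hint : ∀ i, ∃ z : ℤ, pairing (β i) (β k) = z) :
    Submodule.span ℤ (Set.range (mutateBasis B k β)) = Submodule.span ℤ (Set.range β) := by
  choose z hz using hint
  rw [← span_range_sub_smul β (fun i => if 0 < B i k then z i else 0) (k := k)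
    (by simp [hB.apply_self k])]
  congr! with i
  simp only [mutateBasis, reflRoot]
  split_ifs <;> simp [hz, Int.cast_smul_eq_zsmul]

lemma mutateBasis_mutate_of_neg (h : B i k < 0) :
    mutateBasis (mutate k B) k β i = reflRoot (β k) (β i) := by
  simp [mutateBasis, h]

lemma mutateBasis_mutate_of_nonneg (h : 0 ≤ B i k) : mutateBasis (mutate k B) k β i = β i := by
  simp [mutateBasis, h]

lemma abs_pairing_mutateBasis_of_mul_nonpos (hB : IsSkewSymmetrizable B)
    (hβ : IsCompanionBasis Φ B β) (hij : i ≠ j) (hi : i ≠ k) (hj : j ≠ k)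
    (h : B i k * B k j ≤ 0) :
    |pairing (mutateBasis (mutate k B) k β i) (mutateBasis (mutate k B) k β j)| =
      |(mutate k B i j : ℝ)| := by
  rw [mutate_apply_of_mul_nonpos hi hj h, ← hβ.abs_pairing hij]
  rcases lt_or_ge (B i k) 0 with hik | hik <;> rcases lt_or_ge (B j k) 0 with hjk | hjk
  · rw [mutateBasis_mutate_of_neg hik, mutateBasis_mutate_of_neg hjk, pairing_reflRoot_reflRoot]
  · have hkj : B k j = 0 := by nlinarith [hB.nonneg_iff_nonpos.mp hjk]
    rw [mutateBasis_mutate_of_neg hik, mutateBasis_mutate_of_nonneg hjk, pairing_reflRoot_left,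
      (hβ.pairing_eq_zero_iff hj.symm).mpr hkj, mul_zero, sub_zero]
  · have hik0 : B i k = 0 := by nlinarith [hB.pos_iff_neg.mpr hjk]
    rw [mutateBasis_mutate_of_nonneg hik, mutateBasis_mutate_of_neg hjk, pairing_reflRoot_right,
      (hβ.pairing_eq_zero_iff hi).mpr hik0, zero_mul, sub_zero]
  · rw [mutateBasis_mutate_of_nonneg hik, mutateBasis_mutate_of_nonneg hjk]

lemma abs_pairing_mutateBasis_of_mul_pos (hB : IsSkewSymmetrizable B) (hf : IsFiniteType B)
    (hβ : IsCompanionBasis Φ B β) (hli : LinearIndependent ℝ β) (hij : i ≠ j) (hi : i ≠ k)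
    (hj : j ≠ k) (h : 0 < B i k * B k j) :
    |pairing (mutateBasis (mutate k B) k β i) (mutateBasis (mutate k B) k β j)| =
      |(mutate k B i j : ℝ)| := by
  have hpair : pairing (mutateBasis (mutate k B) k β i) (mutateBasis (mutate k B) k β j) =
      pairing (β i) (β j) - pairing (β i) (β k) * pairing (β k) (β j) := by
    rcases mul_pos_iff.mp h with ⟨hik, hkj⟩ | ⟨hik, hkj⟩
    · rw [mutateBasis_mutate_of_nonneg hik.le, mutateBasis_mutate_of_neg (hB.pos_iff_neg.mp hkj),
        pairing_reflRoot_right]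
    · rw [mutateBasis_mutate_of_neg hik, mutateBasis_mutate_of_nonneg (hB.pos_iff_neg.mpr hkj).le,
        pairing_reflRoot_left]
  have hsign : 0 ≤ pairing (β i) (β j) * (pairing (β i) (β k) * pairing (β k) (β j)) := by
    rcases eq_or_ne (B i j) 0 with hij0 | hij0
    · rw [(hβ.pairing_eq_zero_iff hij).mpr hij0, zero_mul]
    have hik0 : B k i ≠ 0 := hB.apply_eq_zero_iff.not.mpr (left_ne_zero_of_mul h.ne')
    have hjk0 : B j k ≠ 0 := hB.apply_eq_zero_iff.not.mpr (right_ne_zero_of_mul h.ne')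
    exact (pairing_mul_pairing_mul_pairing_pos hli hij hi hj
      (hβ.one_le_pairing_mul_pairing hB hij hij0) (hβ.one_le_pairing_mul_pairing hB hj hjk0)
      (hβ.one_le_pairing_mul_pairing hB hi.symm hik0)).le
  rw [hpair, abs_sub_of_mul_nonneg hsign, abs_mul, hβ.abs_pairing hij, hβ.abs_pairing hi,
    hβ.abs_pairing hj.symm]
  have hX := congrArg (fun z : ℤ => (z : ℝ)) (hf.abs_mutate_apply_of_mul_pos hB hi hj h)
  push_cast at hX
  rw [hX, abs_mul]

lemma abs_pairing_mutateBasis (hβk : β k ≠ 0) (hB : IsSkewSymmetrizable B)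
    (hf : IsFiniteType B) (hβ : IsCompanionBasis Φ B β) (hli : LinearIndependent ℝ β)
    (hij : i ≠ j) :
    |pairing (mutateBasis (mutate k B) k β i) (mutateBasis (mutate k B) k β j)| =
      |(mutate k B i j : ℝ)| := by
  have hk : mutateBasis (mutate k B) k β k = β k :=
    mutateBasis_mutate_of_nonneg (hB.apply_self k).ge
  by_cases hi : i = k
  · subst hi
    rw [hk, mutate_apply_left, Int.cast_neg, abs_neg, ← hβ.abs_pairing hij]
    rcases lt_or_ge (B j i) 0 with hji | hji
    · rw [mutateBasis_mutate_of_neg hji, pairing_self_reflRoot_right hβk, abs_neg]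
    · rw [mutateBasis_mutate_of_nonneg hji]
  by_cases hj : j = k
  · subst hj
    rw [hk, mutate_apply_right, Int.cast_neg, abs_neg, ← hβ.abs_pairing hij]
    rcases lt_or_ge (B i j) 0 with hij' | hij'
    · rw [mutateBasis_mutate_of_neg hij', pairing_reflRoot_self_left hβk, abs_neg]
    · rw [mutateBasis_mutate_of_nonneg hij']
  rcases le_or_gt (B i k * B k j) 0 with h | h
  · exact abs_pairing_mutateBasis_of_mul_nonpos hB hβ hij hi hj h
  · exact abs_pairing_mutateBasis_of_mul_pos hB hf hβ hli hij hi hj h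

lemma IsCompanionBasis.mutateBasis_mutate (hΦ : IsRootSystem Φ) (hB : IsSkewSymmetrizable B)
    (hf : IsFiniteType B) (hβ : IsCompanionBasis Φ B β) (k : Fin n) :
    IsCompanionBasis Φ (mutate k B) (mutateBasis (mutate k B) k β) := by
  obtain ⟨-, hne, hspanΦ, -, hrefl, hint⟩ := hΦ
  have hspan : Submodule.span ℤ (Set.range (mutateBasis (mutate k B) k β)) =
      Submodule.span ℤ Φ := by
    rw [span_mutateBasis (hB.mutate k) fun i => hint _ (hβ.1 k) _ (hβ.1 i), hβ.2.2.1]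
  refine ⟨mutateBasis_mem hrefl hβ.1,
    (linearIndependent_of_span_int_eq hspanΦ hspan).restrict_scalars' ℤ, hspan,
    fun i j hij => ?_⟩
  exact abs_pairing_mutateBasis (hne _ (hβ.1 k)) hB hf hβ
    (linearIndependent_of_span_int_eq hspanΦ hβ.2.2.1) hij

end MutateBasis

/-- Corollary 6.6: every exchange matrix of a cluster algebra of finite type
has a companion basis. -/
theorem companion_basis_exists
    (Φ : Set (EuclideanSpace ℝ (Fin n))) (hΦ : IsRootSystem Φ)
    (B : Matrix (Fin n) (Fin n) ℤ) (hB : IsExchangeMatrix Φ B) :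
    ∃ β : Fin n → EuclideanSpace ℝ (Fin n), IsCompanionBasis Φ B β := by
  obtain ⟨hskew, hfin, B₀, hchain, α, hα, hcartan⟩ := hB
  induction hchain using Relation.ReflTransGen.head_induction_on with
  | refl => exact ⟨α, hα.isCompanionBasis hcartan⟩
  | head hstep _ ih =>
    obtain ⟨k, rfl⟩ := hstep
    obtain ⟨β, hβ⟩ := ih (hskew.mutate k) (hfin.mutate k)
    have hβ' := hβ.mutateBasis_mutate hΦ (hskew.mutate k) (hfin.mutate k) k
    rw [mutate_mutate] at hβ'
    exact ⟨_, hβ'⟩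

end ClusterReflection
end

section
/- Let B be an exchange matrix of a cluster algebra of finite simply-laced type with diagram Γ = Γ(B), let 𝓑 = {β_1,…,β_n} be a companion basis for B, and fix a vertex k of Γ. Let I be the set of vertices i of Γ for which there is an arrow i→k in Γ, so that J, the set of remaining neighbours of k, consists of the vertices j with an arrow k→j. Then the signed graph 𝒢(μ_k(𝓑)) associated to the mutated companion basis μ_k(𝓑) coincides with the signed graph obtained from 𝒢(𝓑) by local switching at k with respect to I. -/
namespace ClusterReflection

variable {n : ℕ}

open RealInnerProductSpace

/-- The sign of a real number, as an integer in `{-1, 0, 1}`. -/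
noncomputable def realSign (x : ℝ) : ℤ := if 0 < x then 1 else if x < 0 then -1 else 0

/-- The signed graph `𝒢(𝓑)` of a family of roots: vertices `1, …, n`, an edge `{i,j}` (`i ≠ j`)
whenever `(β_i, β_j) ≠ 0`, with sign the sign of `(β_i, β_j)`; it is recorded as the function
giving the sign of each (potential) edge, with `0` meaning no edge. -/
noncomputable def signedGraph (β : Fin n → EuclideanSpace ℝ (Fin n)) :
    Fin n → Fin n → ℤ :=
  fun i j => if i = j then 0 else realSign ⟪β i, β j⟫

open scoped Classical in
/-- Local switching of a signed graph `g` at the vertex `k` with respect to a set `I` of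
neighbours of `k` (with `J` the set of neighbours of `k` not in `I`):
(i) edges between `I` and `J` are deleted; (ii) a new edge `{i,j}` is introduced for `i ∈ I`,
`j ∈ J` not originally joined, with sign chosen so that the `3`-cycle on `i, j, k` has an even
number of positive signs (i.e. with sign `-(g i k * g j k)`); (iii) the signs of all edges
between `k` and `I` are changed; (iv) all other edges and signs are unchanged. -/
noncomputable def localSwitch (g : Fin n → Fin n → ℤ) (k : Fin n) (I : Set (Fin n)) :
    Fin n → Fin n → ℤ :=
  fun i j =>
    if (i ∈ I ∧ g j k ≠ 0 ∧ j ∉ I) ∨ (j ∈ I ∧ g i k ≠ 0 ∧ i ∉ I) then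
      (if g i j ≠ 0 then 0 else -(g i k * g j k))
    else if (i ∈ I ∧ j = k) ∨ (j ∈ I ∧ i = k) then -(g i j)
    else g i j

/-! ### Auxiliary lemmas -/

section Aux

lemma realSign_neg' (x : ℝ) : realSign (-x) = -realSign x := by
  unfold realSign
  split_ifs <;> (try norm_num) <;> linarith

lemma realSign_eq_zero_iff (x : ℝ) : realSign x = 0 ↔ x = 0 := by
  unfold realSign
  split_ifs with h1 h2
  · simp [h1.ne']
  · simp [h2.ne]
  · simp [le_antisymm (not_lt.mp h1) (not_lt.mp h2)]

variable {β : Fin n → EuclideanSpace ℝ (Fin n)}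

/-- A three-term integer relation among distinct members of a `ℤ`-linearly independent
family forces the coefficients to vanish. -/
lemma relation3 (hli : LinearIndependent ℤ β) {i j k : Fin n}
    (hij : i ≠ j) (hik : i ≠ k) (hjk : j ≠ k) (a b c : ℤ)
    (h : (a : ℝ) • β i + (b : ℝ) • β j + (c : ℝ) • β k = 0) : a = 0 := by
  classical
  set g : Fin n → ℤ := fun t => if t = i then a else if t = j then b else if t = k then c else 0
    with hg
  have hsum : ∑ t, g t • β t = 0 := by
    have e : ∀ t, g t • β t =
        (if t = i then (a : ℝ) • β i else 0) + ((if t = j then (b : ℝ) • β j else 0)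
          + (if t = k then (c : ℝ) • β k else 0)) := by
      intro t
      simp only [hg]
      by_cases h1 : t = i
      · subst h1
        rw [if_pos rfl, if_pos rfl, if_neg hij, if_neg hik, ← Int.cast_smul_eq_zsmul ℝ]
        simp
      · by_cases h2 : t = j
        · subst h2
          rw [if_neg h1, if_pos rfl, if_neg h1, if_pos rfl, if_neg hjk,
            ← Int.cast_smul_eq_zsmul ℝ]
          simp
        · by_cases h3 : t = k
          · subst h3
            rw [if_neg h1, if_neg h2, if_pos rfl, if_neg h1, if_neg h2, if_pos rfl,
              ← Int.cast_smul_eq_zsmul ℝ]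
            simp
          · rw [if_neg h1, if_neg h2, if_neg h3, if_neg h1, if_neg h2, if_neg h3]
            simp
    rw [Finset.sum_congr rfl fun t _ => e t, Finset.sum_add_distrib, Finset.sum_add_distrib,
      Finset.sum_ite_eq' Finset.univ i, Finset.sum_ite_eq' Finset.univ j,
      Finset.sum_ite_eq' Finset.univ k]
    simpa [← add_assoc] using h
  have := Fintype.linearIndependent_iff.mp hli g hsum i
  simpa [hg] using this

/-- A two-term integer relation among distinct members of a `ℤ`-linearly independent
family forces the coefficients to vanish. -/
lemma relation2 (hli : LinearIndependent ℤ β) {i j : Fin n}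
    (hij : i ≠ j) (a b : ℤ)
    (h : (a : ℝ) • β i + (b : ℝ) • β j = 0) : a = 0 := by
  classical
  set g : Fin n → ℤ := fun t => if t = i then a else if t = j then b else 0 with hg
  have hsum : ∑ t, g t • β t = 0 := by
    have e : ∀ t, g t • β t =
        (if t = i then (a : ℝ) • β i else 0) + (if t = j then (b : ℝ) • β j else 0) := by
      intro t
      simp only [hg]
      by_cases h1 : t = i
      · subst h1
        rw [if_pos rfl, if_pos rfl, if_neg hij, ← Int.cast_smul_eq_zsmul ℝ]
        simp
      · by_cases h2 : t = j
        · subst h2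
          rw [if_neg h1, if_pos rfl, if_neg h1, if_pos rfl, ← Int.cast_smul_eq_zsmul ℝ]
          simp
        · rw [if_neg h1, if_neg h2, if_neg h1, if_neg h2]
          simp
    rw [Finset.sum_congr rfl fun t _ => e t, Finset.sum_add_distrib,
      Finset.sum_ite_eq' Finset.univ i, Finset.sum_ite_eq' Finset.univ j]
    simpa using h
  have := Fintype.linearIndependent_iff.mp hli g hsum i
  simpa [hg] using this

/-- In the simply-laced situation the pairing with a root is just the inner product. -/
lemma pairing_eq_inner {Φ : Set (EuclideanSpace ℝ (Fin n))}
    (hsl : ∀ α ∈ Φ, ⟪α, α⟫ = (2 : ℝ)) {y : EuclideanSpace ℝ (Fin n)} (hy : y ∈ Φ)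
    (x : EuclideanSpace ℝ (Fin n)) : pairing x y = ⟪x, y⟫ := by
  unfold pairing
  rw [hsl y hy]
  ring

/-- Inner products of roots are integers (simply-laced normalisation). -/
lemma inner_int {Φ : Set (EuclideanSpace ℝ (Fin n))} (hΦ : IsRootSystem Φ)
    (hsl : ∀ α ∈ Φ, ⟪α, α⟫ = (2 : ℝ)) {x y : EuclideanSpace ℝ (Fin n)}
    (hx : x ∈ Φ) (hy : y ∈ Φ) : ∃ z : ℤ, ⟪x, y⟫ = (z : ℝ) := by
  obtain ⟨z, hz⟩ := hΦ.2.2.2.2.2 y hy x hx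
  exact ⟨z, by rwa [pairing_eq_inner hsl hy] at hz⟩

/-- Inner products of distinct members of a companion basis lie in `{-1, 0, 1}`. -/
lemma inner_vals {Φ : Set (EuclideanSpace ℝ (Fin n))} (hΦ : IsRootSystem Φ)
    (hsl : ∀ α ∈ Φ, ⟪α, α⟫ = (2 : ℝ)) (hβΦ : ∀ i, β i ∈ Φ)
    (hli : LinearIndependent ℤ β) {i j : Fin n} (hij : i ≠ j) :
    ⟪β i, β j⟫ = -1 ∨ ⟪β i, β j⟫ = 0 ∨ ⟪β i, β j⟫ = 1 := by
  obtain ⟨z, hz⟩ := inner_int hΦ hsl (hβΦ i) (hβΦ j)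
  have hii := hsl (β i) (hβΦ i)
  have hjj := hsl (β j) (hβΦ j)
  have esub : ⟪β i - β j, β i - β j⟫ = 4 - 2 * (z : ℝ) := by
    rw [inner_sub_left, inner_sub_right, inner_sub_right, hii, hjj,
      real_inner_comm (β i) (β j), hz]
    ring
  have eadd : ⟪β i + β j, β i + β j⟫ = 4 + 2 * (z : ℝ) := by
    rw [inner_add_left, inner_add_right, inner_add_right, hii, hjj,
      real_inner_comm (β i) (β j), hz]
    ring
  have hub : (z : ℝ) ≤ 2 := by nlinarith [real_inner_self_nonneg (x := β i - β j)]
  have hlb : (-2 : ℝ) ≤ (z : ℝ) := by nlinarith [real_inner_self_nonneg (x := β i + β j)]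
  have hz2 : z ≠ 2 := by
    rintro rfl
    have h0 : β i - β j = 0 := by
      rw [← inner_self_eq_zero (𝕜 := ℝ), esub]
      norm_num
    have : (1 : ℤ) = 0 := by
      refine relation2 hli hij 1 (-1) ?_
      push_cast
      rw [one_smul, neg_one_smul, ← sub_eq_add_neg]
      exact h0
    norm_num at this
  have hzm2 : z ≠ -2 := by
    rintro rfl
    have h0 : β i + β j = 0 := by
      rw [← inner_self_eq_zero (𝕜 := ℝ), eadd]
      norm_num
    have : (1 : ℤ) = 0 := by
      refine relation2 hli hij 1 1 ?_
      push_cast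
      rw [one_smul, one_smul]
      exact h0
    norm_num at this
  have hub' : z ≤ 2 := by exact_mod_cast hub
  have hlb' : -2 ≤ z := by exact_mod_cast hlb
  have hz3 : z = -1 ∨ z = 0 ∨ z = 1 := by omega
  rcases hz3 with rfl | rfl | rfl <;> rw [hz] <;> norm_num

/-- The triangle lemma: if `β i`, `β j` are both non-orthogonal to `β k` and to each other,
then `⟪β i, β j⟫ = ⟪β i, β k⟫ * ⟪β j, β k⟫`. -/
lemma triangle {Φ : Set (EuclideanSpace ℝ (Fin n))} (hΦ : IsRootSystem Φ)
    (hsl : ∀ α ∈ Φ, ⟪α, α⟫ = (2 : ℝ)) (hβΦ : ∀ i, β i ∈ Φ)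
    (hli : LinearIndependent ℤ β) {i j k : Fin n}
    (hij : i ≠ j) (hik : i ≠ k) (hjk : j ≠ k)
    (hci : ⟪β i, β k⟫ = 1 ∨ ⟪β i, β k⟫ = -1)
    (hcj : ⟪β j, β k⟫ = 1 ∨ ⟪β j, β k⟫ = -1)
    (hg : ⟪β i, β j⟫ ≠ 0) :
    ⟪β i, β j⟫ = ⟪β i, β k⟫ * ⟪β j, β k⟫ := by
  have expand : ∀ (x y : EuclideanSpace ℝ (Fin n)) (t : ℝ),
      ⟪x - t • y, x - t • y⟫ = ⟪x, x⟫ - 2 * t * ⟪x, y⟫ + t ^ 2 * ⟪y, y⟫ := by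
    intro x y t
    rw [inner_sub_left, inner_sub_right, inner_sub_right, real_inner_smul_left,
      real_inner_smul_right, real_inner_smul_left, real_inner_smul_right, real_inner_comm y x]
    ring
  have hgv : ⟪β i, β j⟫ = -1 ∨ ⟪β i, β j⟫ = 1 := by
    rcases inner_vals hΦ hsl hβΦ hli hij with h | h | h
    · exact Or.inl h
    · exact absurd h hg
    · exact Or.inr h
  by_contra hne
  set g := ⟪β i, β j⟫ with hgdef
  set ci := ⟪β i, β k⟫ with hcidef
  set cj := ⟪β j, β k⟫ with hcjdef
  have hval : g - ci * cj = 2 * g := by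
    have hprod : ci * cj = g ∨ ci * cj = -g := by
      rcases hgv with h | h <;> rcases hci with h1 | h1 <;> rcases hcj with h2 | h2 <;>
        rw [h, h1, h2] <;> norm_num
    rcases hprod with h | h
    · exact absurd h.symm hne
    · rw [h]; ring
  -- the reflected root γ = β i - ci • β k
  have hγΦ : β i - ci • β k ∈ Φ := by
    have := hΦ.2.2.2.2.1 (β k) (hβΦ k) (β i) (hβΦ i)
    unfold reflRoot at this
    rwa [pairing_eq_inner hsl (hβΦ k), ← hcidef] at this
  have hγγ : ⟪β i - ci • β k, β i - ci • β k⟫ = 2 := hsl _ hγΦ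
  have hγj : ⟪β i - ci • β k, β j⟫ = 2 * g := by
    rw [inner_sub_left, real_inner_smul_left, real_inner_comm (β j) (β k), ← hcjdef, ← hgdef]
    exact hval
  have hzero : ⟪β i - ci • β k - g • β j, β i - ci • β k - g • β j⟫ = 0 := by
    rw [expand, hγγ, hγj, hsl (β j) (hβΦ j)]
    rcases hgv with h | h <;> rw [h] <;> norm_num
  have heq : β i - ci • β k - g • β j = 0 := inner_self_eq_zero.mp hzero
  -- contradiction with linear independence: use integer coefficients
  obtain ⟨zi, hzi⟩ : ∃ z : ℤ, (z : ℝ) = ci := by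
    rcases hci with h | h
    · exact ⟨1, by rw [h]; norm_num⟩
    · exact ⟨-1, by rw [h]; push_cast; ring⟩
  obtain ⟨zg, hzg⟩ : ∃ z : ℤ, (z : ℝ) = g := by
    rcases hgv with h | h
    · exact ⟨-1, by rw [h]; push_cast; ring⟩
    · exact ⟨1, by rw [h]; norm_num⟩
  rw [← hzi, ← hzg] at heq
  have hrel : (((1 : ℤ)) : ℝ) • β i + (((-zg : ℤ)) : ℝ) • β j + (((-zi : ℤ)) : ℝ) • β k = 0 := by
    calc (((1 : ℤ)) : ℝ) • β i + (((-zg : ℤ)) : ℝ) • β j + (((-zi : ℤ)) : ℝ) • β k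
        = β i - ((zi : ℤ) : ℝ) • β k - ((zg : ℤ) : ℝ) • β j := by push_cast; module
      _ = 0 := heq
  have := relation3 hli hij hik hjk 1 (-zg) (-zi) hrel
  norm_num at this

lemma realSign_zero' : realSign (0 : ℝ) = 0 := by norm_num [realSign]

lemma realSign_one' : realSign (1 : ℝ) = 1 := by norm_num [realSign]

lemma realSign_negone' : realSign (-1 : ℝ) = -1 := by norm_num [realSign]

end Aux

/-- Lemma 6.11: in the simply-laced case (all roots of squared length `2`),
for a companion basis `𝓑` of an exchange matrix `B` of finite type and a vertex `k`, with
`I = {i | i → k in Γ(B)}`, the signed graph of the mutated companion basis `μ_k(𝓑)` coincides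
with the local switching at `k` with respect to `I` of the signed graph of `𝓑`. -/
theorem signed_graph_of_mutated_companion_basis
    (Φ : Set (EuclideanSpace ℝ (Fin n))) (hΦ : IsRootSystem Φ)
    (hsl : ∀ α ∈ Φ, ⟪α, α⟫ = (2 : ℝ))
    (B : Matrix (Fin n) (Fin n) ℤ) (hB : IsExchangeMatrix Φ B)
    (β : Fin n → EuclideanSpace ℝ (Fin n)) (hβ : IsCompanionBasis Φ B β)
    (k : Fin n) :
    signedGraph (mutateBasis B k β) =
      localSwitch (signedGraph β) k {i : Fin n | 0 < B i k} := by
  obtain ⟨hβΦ, hli, hspan, hcomp⟩ := hβ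
  obtain ⟨⟨d, hd, hskew⟩, -, -⟩ := hB
  have hkk : ⟪β k, β k⟫ = 2 := hsl _ (hβΦ k)
  have hBkk : B k k = 0 := by
    have h1 := hskew k k
    have h2 : d k * B k k = 0 := by linarith
    rcases mul_eq_zero.mp h2 with h | h
    · exact absurd h (hd k).ne'
    · exact h
  have hIk : ∀ {a : Fin n}, 0 < B a k → a ≠ k := by
    intro a ha hak
    rw [hak, hBkk] at ha
    exact lt_irrefl 0 ha
  have hcI : ∀ {a : Fin n}, 0 < B a k → ⟪β a, β k⟫ = 1 ∨ ⟪β a, β k⟫ = -1 := by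
    intro a ha
    have hne := hIk ha
    have h1 := hcomp a k hne
    rw [pairing_eq_inner hsl (hβΦ k)] at h1
    have h0 : ⟪β a, β k⟫ ≠ 0 := by
      intro h
      rw [h, abs_zero] at h1
      have hBne : (B a k : ℝ) ≠ 0 := by exact_mod_cast ha.ne'
      exact hBne (abs_eq_zero.mp h1.symm)
    rcases inner_vals hΦ hsl hβΦ hli hne with h | h | h
    · exact Or.inr h
    · exact absurd h h0
    · exact Or.inl h
  have hsg : ∀ a b : Fin n, a ≠ b → signedGraph β a b = realSign ⟪β a, β b⟫ := by
    intro a b h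
    simp [signedGraph, h]
  have hsgd : ∀ a : Fin n, signedGraph β a a = 0 := by
    intro a
    simp [signedGraph]
  have hmut : ∀ a, 0 < B a k → mutateBasis B k β a = β a - ⟪β a, β k⟫ • β k := by
    intro a ha
    simp only [mutateBasis, if_pos ha]
    unfold reflRoot
    rw [pairing_eq_inner hsl (hβΦ k)]
  have hmut' : ∀ a, ¬ 0 < B a k → mutateBasis B k β a = β a := by
    intro a ha
    simp only [mutateBasis, if_neg ha]
  have expand2 : ∀ x y : EuclideanSpace ℝ (Fin n),
      ⟪x - ⟪x, β k⟫ • β k, y - ⟪y, β k⟫ • β k⟫ = ⟪x, y⟫ := by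
    intro x y
    simp only [inner_sub_left, inner_sub_right, real_inner_smul_left, real_inner_smul_right,
      hkk, real_inner_comm x (β k), real_inner_comm y (β k)]
    ring
  have expandL : ∀ x y : EuclideanSpace ℝ (Fin n),
      ⟪x - ⟪x, β k⟫ • β k, y⟫ = ⟪x, y⟫ - ⟪x, β k⟫ * ⟪y, β k⟫ := by
    intro x y
    rw [inner_sub_left, real_inner_smul_left, real_inner_comm y (β k)]
  have expandR : ∀ x y : EuclideanSpace ℝ (Fin n),
      ⟪x, y - ⟪y, β k⟫ • β k⟫ = ⟪x, y⟫ - ⟪y, β k⟫ * ⟪x, β k⟫ := by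
    intro x y
    rw [inner_sub_right, real_inner_smul_right]
  have hkmem : k ∉ {a : Fin n | 0 < B a k} := by
    simp [hBkk]
  funext i j
  simp only [localSwitch, Set.mem_setOf_eq]
  by_cases hij : i = j
  · subst hij
    rw [if_neg, if_neg, hsgd]
    · simp [signedGraph]
    · rintro (⟨h1, h2⟩ | ⟨h1, h2⟩) <;> (rw [h2] at h1; rw [hBkk] at h1; exact lt_irrefl 0 h1)
    · rintro (⟨h1, -, h3⟩ | ⟨h1, -, h3⟩) <;> exact h3 h1
  have hLHS : signedGraph (mutateBasis B k β) i j
      = realSign ⟪mutateBasis B k β i, mutateBasis B k β j⟫ := by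
    simp [signedGraph, hij]
  by_cases hi : 0 < B i k <;> by_cases hj : 0 < B j k
  · -- both in I : inner product unchanged
    rw [hLHS, hmut i hi, hmut j hj, expand2]
    rw [if_neg, if_neg, hsg i j hij]
    · rintro (⟨-, h2⟩ | ⟨-, h2⟩)
      · exact hIk hj h2
      · exact hIk hi h2
    · rintro (⟨-, -, h3⟩ | ⟨-, -, h3⟩)
      · exact h3 hj
      · exact h3 hi
  · -- i ∈ I, j ∉ I
    by_cases hjk : j = k
    · -- j = k
      subst hjk
      rw [hLHS, hmut i hi, hmut' j hj, expandL, hkk]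
      rw [if_neg, if_pos (Or.inl ⟨hi, rfl⟩), hsg i j (hIk hi)]
      · rw [show ⟪β i, β j⟫ - ⟪β i, β j⟫ * 2 = -⟪β i, β j⟫ by ring, realSign_neg']
      · rintro (⟨-, h2, -⟩ | ⟨h1, -, -⟩)
        · exact h2 (hsgd j)
        · exact hkmem h1
    · -- j ≠ k
      rw [hLHS, hmut i hi, hmut' j hj, expandL]
      by_cases hcj : ⟪β j, β k⟫ = 0
      · -- j not a neighbour of k
        rw [hcj, mul_zero, sub_zero]
        rw [if_neg, if_neg, hsg i j hij]
        · rintro (⟨-, h2⟩ | ⟨h1, -⟩)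
          · exact hjk h2
          · exact hj h1
        · rintro (⟨-, h2, -⟩ | ⟨h1, -, -⟩)
          · exact h2 (by rw [hsg j k hjk, hcj, realSign_zero'])
          · exact hj h1
      · -- j is a neighbour of k, in J
        have hcjv : ⟪β j, β k⟫ = 1 ∨ ⟪β j, β k⟫ = -1 := by
          rcases inner_vals hΦ hsl hβΦ hli hjk with h | h | h
          · exact Or.inr h
          · exact absurd h hcj
          · exact Or.inl h
        have hciv := hcI hi
        rw [if_pos (Or.inl ⟨hi, by rw [hsg j k hjk]; rw [Ne, realSign_eq_zero_iff]; exact hcj, hj⟩)]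
        by_cases hgij : ⟪β i, β j⟫ = 0
        · -- no original edge : new edge with product sign
          rw [if_neg (by rw [hsg i j hij, Ne, realSign_eq_zero_iff, not_not]; exact hgij)]
          rw [hsg i k (hIk hi), hsg j k hjk, hgij, zero_sub]
          rcases hciv with h1 | h1 <;> rcases hcjv with h2 | h2 <;>
            rw [h1, h2] <;>
            norm_num [realSign_one', realSign_negone', realSign_neg']
        · -- original edge : deleted
          have htri := triangle hΦ hsl hβΦ hli hij (hIk hi) hjk hciv hcjv hgij
          rw [if_pos (by rw [hsg i j hij, Ne, realSign_eq_zero_iff]; exact hgij)]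
          rw [htri, sub_self, realSign_zero']
  · -- i ∉ I, j ∈ I
    by_cases hik' : i = k
    · -- i = k
      subst hik'
      rw [hLHS, hmut' i hi, hmut j hj, expandR, hkk]
      rw [if_neg, if_pos (Or.inr ⟨hj, rfl⟩), hsg i j (Ne.symm (hIk hj))]
      · rw [real_inner_comm (β i) (β j),
          show ⟪β i, β j⟫ - ⟪β i, β j⟫ * 2 = -⟪β i, β j⟫ from by ring, realSign_neg']
      · rintro (⟨h1, -, -⟩ | ⟨-, h2, -⟩)
        · exact hkmem h1
        · exact h2 (hsgd i)
    · -- i ≠ k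
      rw [hLHS, hmut' i hi, hmut j hj, expandR]
      by_cases hci : ⟪β i, β k⟫ = 0
      · rw [hci, mul_zero, sub_zero]
        rw [if_neg, if_neg, hsg i j hij]
        · rintro (⟨h1, -⟩ | ⟨-, h2⟩)
          · exact hi h1
          · exact hik' h2
        · rintro (⟨h1, -, -⟩ | ⟨-, h2, -⟩)
          · exact hi h1
          · exact h2 (by rw [hsg i k hik', hci, realSign_zero'])
      · have hciv : ⟪β i, β k⟫ = 1 ∨ ⟪β i, β k⟫ = -1 := by
          rcases inner_vals hΦ hsl hβΦ hli hik' with h | h | h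
          · exact Or.inr h
          · exact absurd h hci
          · exact Or.inl h
        have hcjv := hcI hj
        rw [if_pos (Or.inr ⟨hj, by rw [hsg i k hik']; rw [Ne, realSign_eq_zero_iff]; exact hci, hi⟩)]
        by_cases hgij : ⟪β i, β j⟫ = 0
        · rw [if_neg (by rw [hsg i j hij, Ne, realSign_eq_zero_iff, not_not]; exact hgij)]
          rw [hsg i k hik', hsg j k (hIk hj), hgij, zero_sub]
          rcases hciv with h1 | h1 <;> rcases hcjv with h2 | h2 <;>
            rw [h1, h2] <;>
            norm_num [realSign_one', realSign_negone', realSign_neg']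
        · have htri := triangle hΦ hsl hβΦ hli hij hik' (hIk hj) hciv hcjv hgij
          rw [if_pos (by rw [hsg i j hij, Ne, realSign_eq_zero_iff]; exact hgij)]
          rw [htri, show ⟪β i, β k⟫ * ⟪β j, β k⟫ - ⟪β j, β k⟫ * ⟪β i, β k⟫ = 0 from by ring,
            realSign_zero']
  · -- neither in I : nothing changes
    rw [hLHS, hmut' i hi, hmut' j hj]
    rw [if_neg, if_neg, hsg i j hij]
    · rintro (⟨h1, -⟩ | ⟨h1, -⟩)
      · exact hi h1
      · exact hj h1
    · rintro (⟨h1, -, -⟩ | ⟨h1, -, -⟩)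
      · exact hi h1
      · exact hj h1

end ClusterReflection
end
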